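/- Let T be a rooted D-regular tree of depth N with leaf set L, and suppose the events {S(v) : v ∈ T} satisfy: (i) for each internal vertex v with children v_1,...,v_D, S(v) = ∩_j S(v_j), where conditioned on a sigma-field F_{|v|} the S(v_j) are independent and identically distributed; (ii) P[S(v)] = p_suc for every leaf v. Then P[S(root)] ≥ p_suc^(D^(N-1)), i.e. p_suc raised to the number of leaves. -/

import Mathlib

open MeasureTheory

/-- Lemma 4.3 (success probability on a `D`-regular tree of depth `N`): vertices at
depth `ℓ ∈ {1,…,N}` are encoded as functions `Fin (ℓ-1) → Fin D` (so the root, of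
depth 1, is the unique function on `Fin 0`, and there are `D^(N-1)` leaves).
If each internal event decomposes as the intersection of its children's events, which are
conditionally i.i.d. given a sigma-field `F_{|v|}`, and every leaf event has probability
`p_suc`, then the root event has probability at least `p_suc^(D^(N-1))`. -/
theorem stmt_10 {Ω : Type*} {mΩ : MeasurableSpace Ω} (μ : Measure Ω)
    [IsProbabilityMeasure μ] (D N : ℕ) (hD : 0 < D) (hN : 1 ≤ N)
    (F : ℕ → MeasurableSpace Ω) (hF : ∀ i, F i ≤ mΩ)
    (S : (i : ℕ) → (Fin i → Fin D) → Set Ω)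
    (hmeas : ∀ i v, MeasurableSet (S i v))
    (hdecomp : ∀ i, i + 1 < N → ∀ v : Fin i → Fin D,
      S i v = ⋂ j : Fin D, S (i + 1) (Fin.snoc v j))
    (hcondiid : ∀ i, i + 1 < N → ∀ v : Fin i → Fin D,
      (condExp (F i) μ (Set.indicator (S i v) (fun _ => (1 : ℝ)))
        =ᵐ[μ] fun ω =>
          (condExp (F i) μ (Set.indicator (S (i + 1) (Fin.snoc v ⟨0, hD⟩))
            (fun _ => (1 : ℝ))) ω) ^ D) ∧
      ∀ j : Fin D,
        condExp (F i) μ (Set.indicator (S (i + 1) (Fin.snoc v j)) (fun _ => (1 : ℝ)))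
          =ᵐ[μ] condExp (F i) μ (Set.indicator (S (i + 1) (Fin.snoc v ⟨0, hD⟩))
            (fun _ => (1 : ℝ))))
    (p_suc : ℝ)
    (hleaf : ∀ v : Fin (N - 1) → Fin D, (μ (S (N - 1) v)).toReal = p_suc) :
    p_suc ^ (D ^ (N - 1)) ≤ (μ (S 0 (fun j => j.elim0))).toReal := by
  have hp0 : 0 ≤ p_suc := by
    rw [← hleaf (fun _ => ⟨0, hD⟩)]; exact ENNReal.toReal_nonneg
  have key : ∀ m i, i + m = N - 1 → ∀ v : Fin i → Fin D,
      p_suc ^ (D ^ m) ≤ (μ (S i v)).toReal := by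
    intro m
    induction m with
    | zero =>
      intro i hi v
      simp only [Nat.add_zero] at hi
      subst hi
      simp [hleaf v]
    | succ m ih =>
      intro i hi v
      have hiN : i + 1 < N := by omega
      set g := condExp (F i) μ (Set.indicator (S (i + 1) (Fin.snoc v ⟨0, hD⟩))
        (fun _ => (1 : ℝ))) with hg
      have hint : Integrable g μ := integrable_condExp
      have hnn : ∀ᵐ ω ∂μ, 0 ≤ g ω := condExp_nonneg
        (Filter.Eventually.of_forall fun ω => Set.indicator_nonneg (fun _ _ => zero_le_one) ω)
      have hle1 : ∀ᵐ ω ∂μ, g ω ≤ 1 := by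
        have hmono := condExp_mono (μ := μ) (m := F i)
          (f := Set.indicator (S (i + 1) (Fin.snoc v ⟨0, hD⟩)) (fun _ => (1 : ℝ)))
          (g := fun _ => (1 : ℝ))
          ((integrable_const 1).indicator (hmeas _ _)) (integrable_const 1)
          (Filter.Eventually.of_forall fun ω =>
            Set.indicator_le_self' (fun _ _ => zero_le_one) ω)
        have hc : condExp (F i) μ (fun _ => (1 : ℝ)) = fun _ => (1 : ℝ) :=
          condExp_const (hF i) 1
        filter_upwards [hmono] with ω h using by rw [hc] at h; exact h
      have hgi : Integrable (fun ω => (g ω) ^ D) μ := by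
        refine Integrable.mono' (integrable_const 1) (hint.aestronglyMeasurable.pow _) ?_
        filter_upwards [hnn, hle1] with ω h0 h1
        rw [Real.norm_eq_abs, abs_of_nonneg (pow_nonneg h0 _)]
        exact pow_le_one₀ h0 h1
      have hjensen := (convexOn_pow D).map_integral_le (μ := μ) (f := g)
        (continuous_pow D).continuousOn isClosed_Ici
        (by filter_upwards [hnn] with ω h using h) hint hgi
      have hintg : ∫ ω, g ω ∂μ = (μ (S (i + 1) (Fin.snoc v ⟨0, hD⟩))).toReal := by
        rw [hg, integral_condExp (hF i)]
        exact integral_indicator_one (hmeas _ _)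
      have hSi : (μ (S i v)).toReal = ∫ ω, (g ω) ^ D ∂μ := by
        have h1 : (μ (S i v)).toReal
            = ∫ ω, Set.indicator (S i v) (fun _ => (1 : ℝ)) ω ∂μ :=
          (integral_indicator_one (hmeas _ _)).symm
        rw [h1, ← integral_condExp (hF i)
          (f := Set.indicator (S i v) (fun _ => (1 : ℝ))) (μ := μ)]
        exact integral_congr_ae ((hcondiid i hiN v).1)
      have hchild : p_suc ^ (D ^ m) ≤ (μ (S (i + 1) (Fin.snoc v ⟨0, hD⟩))).toReal :=
        ih (i + 1) (by omega) _
      calc p_suc ^ (D ^ (m + 1)) = (p_suc ^ (D ^ m)) ^ D := by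
            rw [← pow_mul, pow_succ]
        _ ≤ ((μ (S (i + 1) (Fin.snoc v ⟨0, hD⟩))).toReal) ^ D :=
            pow_le_pow_left₀ (pow_nonneg hp0 _) hchild D
        _ = (∫ ω, g ω ∂μ) ^ D := by rw [hintg]
        _ ≤ ∫ ω, (g ω) ^ D ∂μ := hjensen
        _ = (μ (S i v)).toReal := hSi.symm
  exact key (N - 1) 0 (by omega) _
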